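/- arXiv:2402.10962 — 3 statements merged into one kernel-verified Lean document; each statement's English description precedes it below -/
import Mathlib

section
/- Let C ⊆ ℝ^D be a convex cone whose linear span has dimension d (1 ≤ d ≤ D), let ε ∈ (0,1), and let C^ε be its ε-approximate cone. Suppose the initial vectors h_1, …, h_{t₀} all lie in C^ε, and let {W_{l,m} : 1 ≤ l ≤ L, 1 ≤ m ≤ H} be matrices in ℝ^{D×D} each of which maps C^ε into C^ε. For each t ≥ t₀, define activations by h_j^0 = h_j for j = 1,…,t and h_j^l = h_j^{l−1} + Σ_{m=1}^H Σ_{s=1}^j α_{j,s}^{l,m} W_{l,m} h_s^{l−1} for l = 1,…,L, where the coefficients α_{j,s}^{l,m} are arbitrary strictly positive reals (e.g. softmax attention weights), and generate the next token h_{t+1} = h_t^L / ‖h_t^L‖ (assuming h_t^L ≠ 0). Then every generated vector h_t (t ≥ 1) and every intermediate activation h_j^l lies in the convex hull of C^ε. -/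
open RealInnerProductSpace

noncomputable section

/-- The `ε`-approximate cone of a convex cone `C`:
`C^ε = {w : w = u + v, u ∈ C, v ∈ span(C)^⊥, ‖v‖ ≤ ε‖w‖}`. -/
def approxCone {E : Type*} [NormedAddCommGroup E] [InnerProductSpace ℝ E]
    (C : ConvexCone ℝ E) (ε : ℝ) : Set E :=
  {w | ∃ u ∈ C, ∃ v ∈ (Submodule.span ℝ (C : Set E))ᗮ, w = u + v ∧ ‖v‖ ≤ ε * ‖w‖}

/-- **Theorem 1, first assertion (simplified transformer keeps tokens in the convex hull of
`C^ε`).** Let `C ⊆ ℝ^D` be a convex cone whose span has dimension `d` (`1 ≤ d ≤ D`),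
`ε ∈ (0,1)`, and `C^ε` its `ε`-approximate cone. Suppose the initial tokens
`h 1, …, h t₀` lie in `C^ε`, and the output-value matrices `W l m` (`1 ≤ l ≤ L`,
`1 ≤ m ≤ H`) each map `C^ε` into `C^ε`. For each `t ≥ t₀` the activations are
`g t j 0 = h j` and
`g t j l = g t j (l−1) + ∑_{m=1}^H ∑_{s=1}^j (α t l m j s) • W l m (g t s (l−1))`
with arbitrary strictly positive coefficients `α`, and the next token is generated by
`h (t+1) = g t t L / ‖g t t L‖` (with `g t t L ≠ 0`). Then every generated token `h t`
(`t ≥ 1`) and every intermediate activation `g t j l` lies in the convex hull of `C^ε`. -/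
theorem stmt_0 (D d L H t₀ : ℕ) (hd : 1 ≤ d) (hdD : d ≤ D)
    (C : ConvexCone ℝ (EuclideanSpace ℝ (Fin D)))
    (hdim : Module.finrank ℝ
      (Submodule.span ℝ (C : Set (EuclideanSpace ℝ (Fin D)))) = d)
    (ε : ℝ) (hε : ε ∈ Set.Ioo (0 : ℝ) 1)
    (ht₀ : 1 ≤ t₀)
    (h : ℕ → EuclideanSpace ℝ (Fin D))
    (g : ℕ → ℕ → ℕ → EuclideanSpace ℝ (Fin D))
    (W : ℕ → ℕ → EuclideanSpace ℝ (Fin D) →ₗ[ℝ] EuclideanSpace ℝ (Fin D))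
    (α : ℕ → ℕ → ℕ → ℕ → ℕ → ℝ)
    (hW : ∀ l ∈ Finset.Icc 1 L, ∀ m ∈ Finset.Icc 1 H,
      ∀ u ∈ approxCone C ε, W l m u ∈ approxCone C ε)
    (hinit : ∀ j ∈ Finset.Icc 1 t₀, h j ∈ approxCone C ε)
    (hα : ∀ t l m j s, 0 < α t l m j s)
    (hg0 : ∀ t, t₀ ≤ t → ∀ j ∈ Finset.Icc 1 t, g t j 0 = h j)
    (hgrec : ∀ t, t₀ ≤ t → ∀ j ∈ Finset.Icc 1 t, ∀ l ∈ Finset.Icc 1 L,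
      g t j l = g t j (l - 1) +
        ∑ m ∈ Finset.Icc 1 H, ∑ s ∈ Finset.Icc 1 j,
          α t l m j s • W l m (g t s (l - 1)))
    (hne : ∀ t, t₀ ≤ t → g t t L ≠ 0)
    (hnext : ∀ t, t₀ ≤ t → h (t + 1) = ‖g t t L‖⁻¹ • g t t L) :
    (∀ t, 1 ≤ t → h t ∈ convexHull ℝ (approxCone C ε)) ∧
    (∀ t, t₀ ≤ t → ∀ j ∈ Finset.Icc 1 t, ∀ l, l ≤ L →
      g t j l ∈ convexHull ℝ (approxCone C ε)) := by

  obtain ⟨hε0, hε1⟩ := hε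
  set S := approxCone C ε with hSdef
  set K := convexHull ℝ S with hKdef
  -- S is closed under positive scalar multiplication
  have hSsmul : ∀ c : ℝ, 0 < c → ∀ w ∈ S, c • w ∈ S := by
    rintro c hc w ⟨u, hu, v, hv, hw, hvn⟩
    refine ⟨c • u, C.smul_mem hc hu, c • v, Submodule.smul_mem _ _ hv,
      by rw [hw, smul_add], ?_⟩
    rw [norm_smul, norm_smul, Real.norm_eq_abs, abs_of_pos hc]
    nlinarith [norm_nonneg w, norm_nonneg v]
  -- K is closed under positive scalar multiplication
  have hKsmul : ∀ c : ℝ, 0 < c → ∀ x ∈ K, c • x ∈ K := by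
    intro c hc x hx
    have hsub : K ⊆ {x | c • x ∈ K} := by
      apply convexHull_min
      · exact fun w hw => subset_convexHull ℝ S (hSsmul c hc w hw)
      · exact (convex_convexHull ℝ S).linear_preimage (LinearMap.lsmul ℝ _ c)
    exact hsub hx
  -- K is closed under addition
  have hKadd : ∀ x y, x ∈ K → y ∈ K → x + y ∈ K := by
    intro x y hx hy
    have hmid : (1/2 : ℝ) • x + (1/2 : ℝ) • y ∈ K :=
      (convex_convexHull ℝ S) hx hy (by norm_num) (by norm_num) (by norm_num)
    have := hKsmul 2 two_pos _ hmid
    rwa [smul_add, smul_smul, smul_smul, show (2:ℝ) * (1/2) = 1 by norm_num,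
      one_smul, one_smul] at this
  -- W maps K into K
  have hKW : ∀ l ∈ Finset.Icc 1 L, ∀ m ∈ Finset.Icc 1 H, ∀ x ∈ K, W l m x ∈ K := by
    intro l hl m hm x hx
    have hsub : K ⊆ {x | W l m x ∈ K} := by
      apply convexHull_min
      · exact fun w hw => subset_convexHull ℝ S (hW l hl m hm w hw)
      · exact (convex_convexHull ℝ S).linear_preimage (W l m)
    exact hsub hx
  -- nonempty sums of elements of K lie in K
  have hKsum : ∀ (s : Finset ℕ) (f : ℕ → EuclideanSpace ℝ (Fin D)), s.Nonempty →
      (∀ i ∈ s, f i ∈ K) → ∑ i ∈ s, f i ∈ K := by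
    intro s
    induction s using Finset.cons_induction with
    | empty => intro f hne; exact absurd hne (by simp)
    | cons a s ha ih =>
      intro f _ hf
      rw [Finset.sum_cons]
      rcases s.eq_empty_or_nonempty with rfl | hs
      · simpa using hf a (by simp)
      · exact hKadd _ _ (hf a (by simp)) (ih f hs fun i hi => hf i (by simp [hi]))
  -- activations stay in K, given tokens up to t are in K
  have hgK : ∀ t, t₀ ≤ t → (∀ j ∈ Finset.Icc 1 t, h j ∈ K) →
      ∀ l, l ≤ L → ∀ j ∈ Finset.Icc 1 t, g t j l ∈ K := by
    intro t ht hh l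
    induction l with
    | zero => intro _ j hj; rw [hg0 t ht j hj]; exact hh j hj
    | succ l ih =>
      intro hlL j hj
      obtain ⟨hj1, hj2⟩ := Finset.mem_Icc.mp hj
      have hl1 : l + 1 ∈ Finset.Icc 1 L := Finset.mem_Icc.mpr ⟨by omega, hlL⟩
      rw [hgrec t ht j hj (l + 1) hl1]
      simp only [Nat.add_sub_cancel]
      have hprev : g t j l ∈ K := ih (by omega) j hj
      rcases (Finset.Icc 1 H).eq_empty_or_nonempty with he | hne'
      · simpa [he] using hprev
      · refine hKadd _ _ hprev (hKsum _ _ hne' fun m hm => hKsum _ _ ?_ fun s hs => ?_)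
        · exact ⟨1, Finset.mem_Icc.mpr ⟨le_rfl, hj1⟩⟩
        · obtain ⟨hs1, hs2⟩ := Finset.mem_Icc.mp hs
          exact hKsmul _ (hα t (l+1) m j s) _
            (hKW (l+1) hl1 m hm _ (ih (by omega) s (Finset.mem_Icc.mpr ⟨hs1, by omega⟩)))
  -- tokens stay in K
  have hhK : ∀ t, ∀ j ∈ Finset.Icc 1 t, h j ∈ K := by
    intro t
    induction t with
    | zero => simp
    | succ t ih =>
      intro j hj
      obtain ⟨hj1, hj2⟩ := Finset.mem_Icc.mp hj
      by_cases hjt : j ≤ t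
      · exact ih j (Finset.mem_Icc.mpr ⟨hj1, hjt⟩)
      · have hj' : j = t + 1 := by omega
        subst hj'
        by_cases hjt0 : t + 1 ≤ t₀
        · exact subset_convexHull ℝ S (hinit (t+1) (Finset.mem_Icc.mpr ⟨hj1, hjt0⟩))
        · have ht : t₀ ≤ t := by omega
          rw [hnext t ht]
          have hg := hgK t ht (fun j hj => ih j hj) L le_rfl t
            (Finset.mem_Icc.mpr ⟨ht₀.trans ht, le_rfl⟩)
          exact hKsmul _ (inv_pos.mpr (norm_pos_iff.mpr (hne t ht))) _ hg
  refine ⟨fun t ht1 => hhK t t (Finset.mem_Icc.mpr ⟨ht1, le_rfl⟩),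
    fun t ht j hj l hl => hgK t ht (fun j hj => hhK t j hj) l hl j hj⟩
end
end

section
/- Let D ≥ 1 be an integer and η ∈ (0,1). If the real number n satisfies n ≥ 4D + 2 log(1/η), then 2^{−n} (e·n/D)^D < η. -/
lemma log_lt_aux (s : ℝ) (hs : 0 < s) : Real.log s < (Real.log 2 - 1/2) * s + 1 := by
  have hl2 : (0.6931471803 : ℝ) < Real.log 2 := Real.log_two_gt_d9
  have hc : (0 : ℝ) < Real.log 2 - 1/2 := by linarith
  have h1 : Real.log ((Real.log 2 - 1/2) * s) ≤ (Real.log 2 - 1/2) * s - 1 :=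
    Real.log_le_sub_one_of_pos (by positivity)
  have h2 : Real.log ((Real.log 2 - 1/2) * s) = Real.log (Real.log 2 - 1/2) + Real.log s :=
    Real.log_mul hc.ne' hs.ne'
  have he : (2.7182818283 : ℝ) < Real.exp 1 := Real.exp_one_gt_d9
  have he2 : (7 : ℝ) < Real.exp 2 := by
    have h : Real.exp 2 = Real.exp 1 * Real.exp 1 := by
      rw [← Real.exp_add]; norm_num
    nlinarith
  have hexp : Real.exp (-2) < Real.log 2 - 1/2 := by
    rw [Real.exp_neg, inv_lt_iff_one_lt_mul₀ (by positivity)]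
    nlinarith
  have h3 : (-2 : ℝ) < Real.log (Real.log 2 - 1/2) := by
    calc (-2 : ℝ) = Real.log (Real.exp (-2)) := (Real.log_exp _).symm
      _ < Real.log (Real.log 2 - 1/2) := Real.log_lt_log (Real.exp_pos _) hexp
  linarith

/-- **Key analytic estimate in Proposition 1.** Let `D ≥ 1` be an integer and `η ∈ (0,1)`.
If the real number `n` satisfies `n ≥ 4D + 2 log(1/η)`, then `2^(−n) (e·n/D)^D < η`.
Here `log` is the natural logarithm and `e` is Euler's number; `2^(−n)` is a real power. -/
theorem stmt_5 (D : ℕ) (hD : 1 ≤ D) (η : ℝ) (hη : η ∈ Set.Ioo (0 : ℝ) 1) (n : ℝ)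
    (hn : 4 * D + 2 * Real.log (1 / η) ≤ n) :
    (2 : ℝ) ^ (-n) * (Real.exp 1 * n / D) ^ D < η := by
  obtain ⟨hη0, hη1⟩ := hη
  have hD0 : (0 : ℝ) < D := by exact_mod_cast hD
  set L : ℝ := Real.log (1 / η) with hLdef
  have hL0 : 0 < L := by
    apply Real.log_pos
    rw [lt_div_iff₀ hη0]; linarith
  have hLη : Real.log η = -L := by
    rw [hLdef, one_div, Real.log_inv]; ring
  set n₀ : ℝ := 4 * D + 2 * L with hn₀def
  have hn₀pos : 0 < n₀ := by rw [hn₀def]; linarith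
  have hn₀n : n₀ ≤ n := hn
  have hnpos : 0 < n := lt_of_lt_of_le hn₀pos hn₀n
  have hl2 : (0.6931471803 : ℝ) < Real.log 2 := Real.log_two_gt_d9
  -- Step 1: concavity of log
  have step1 : Real.log (n / D) ≤ Real.log (n₀ / D) + (n - n₀) / n₀ := by
    have h := Real.log_le_sub_one_of_pos (show 0 < n / n₀ by positivity)
    rw [Real.log_div hnpos.ne' hD0.ne', Real.log_div hn₀pos.ne' hD0.ne']
    rw [Real.log_div hnpos.ne' hn₀pos.ne'] at h
    have : (n - n₀) / n₀ = n / n₀ - 1 := by field_simp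
    linarith
  -- Step 2
  have step2 : (D : ℝ) * ((n - n₀) / n₀) ≤ (n - n₀) * Real.log 2 := by
    rw [mul_div_assoc', div_le_iff₀ hn₀pos]
    have hnn : 0 ≤ n - n₀ := by linarith
    have h4D : 4 * (D : ℝ) ≤ n₀ := by rw [hn₀def]; linarith
    have hDn : (D : ℝ) ≤ Real.log 2 * n₀ := by nlinarith
    nlinarith [mul_le_mul_of_nonneg_left hDn hnn]
  -- Step 3: the boundary case
  have step3 : (D : ℝ) * (1 + Real.log (n₀ / D)) - n₀ * Real.log 2 < -L := by
    set s : ℝ := n₀ / D with hsdef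
    have hs0 : 0 < s := by positivity
    have hsn : n₀ = D * s := by rw [hsdef]; field_simp
    have hsL : 2 * L = (D : ℝ) * (s - 4) := by
      have : s = (4 * D + 2 * L) / D := by rw [hsdef, hn₀def]
      rw [this]; field_simp; ring
    have hA := log_lt_aux s hs0
    nlinarith [mul_lt_mul_of_pos_left hA hD0]
  -- Key inequality
  have key : (D : ℝ) * (1 + Real.log (n / D)) - n * Real.log 2 < Real.log η := by
    rw [hLη]
    have h1 : (D : ℝ) * (1 + Real.log (n / D)) ≤
        (D : ℝ) * (1 + Real.log (n₀ / D)) + (D : ℝ) * ((n - n₀) / n₀) := by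
      nlinarith [step1, hD0]
    nlinarith [step2, step3]
  -- Convert goal to exp form
  have hP : 0 < Real.exp 1 * n / D := by positivity
  have hLHS : (2 : ℝ) ^ (-n) * (Real.exp 1 * n / D) ^ D
      = Real.exp ((D : ℝ) * (1 + Real.log (n / D)) - n * Real.log 2) := by
    have h2 : (2 : ℝ) ^ (-n) = Real.exp (Real.log 2 * (-n)) :=
      Real.rpow_def_of_pos two_pos _
    have h3 : (Real.exp 1 * n / D) ^ D = Real.exp ((D : ℝ) * Real.log (Real.exp 1 * n / D)) := by
      rw [← Real.log_pow, Real.exp_log (pow_pos hP D)]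
    have h4 : Real.log (Real.exp 1 * n / D) = 1 + Real.log (n / D) := by
      rw [mul_div_assoc, Real.log_mul (Real.exp_ne_zero 1) (by positivity), Real.log_exp]
    rw [h2, h3, h4, ← Real.exp_add]
    ring_nf
  rw [hLHS]
  calc Real.exp ((D : ℝ) * (1 + Real.log (n / D)) - n * Real.log 2)
      < Real.exp (Real.log η) := Real.exp_lt_exp.2 key
    _ = η := Real.exp_log hη0
end

section
/- Let 1 ≤ d₁ < d₂ ≤ D, let ψ₁, ψ₂ ∈ (0, π/2), and let c₁, c₂ be unit vectors in ℝ^D. Suppose C₀ is a convex cone of dimension d₁ contained in a d₁-dimensional spherical cone P^{d₁}[c₁, ψ₁], and C_n is a convex cone of dimension d₂ containing a d₂-dimensional spherical cone P^{d₂}[c₂, ψ₂]. Then there exists a constant K, depending only on D, d₁, d₂, ψ₁, ψ₂ (and not on ε), such that for all ε ∈ (0,1), μ(C₀^ε) ≤ K · ε^{d₂−d₁} · μ(C_n^ε). -/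
open RealInnerProductSpace MeasureTheory

noncomputable section

/-- The spherical cone `P^d[c,θ] = {u ∈ U : ⟨c,u⟩ ≥ ‖u‖ cos θ}` with underlying subspace `U`. -/
def sphericalCone {E : Type*} [NormedAddCommGroup E] [InnerProductSpace ℝ E]
    (U : Submodule ℝ E) (c : E) (θ : ℝ) : Set E :=
  {u | u ∈ U ∧ ‖u‖ * Real.cos θ ≤ ⟪c, u⟫}

/-- The normalized spherical measure `σ_{D−1}` on the unit sphere `S^{D−1} ⊆ ℝ^D`
(normalized so that `σ_{D−1}(S^{D−1}) = 1`). -/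
def sphericalMeasure (D : ℕ) :
    Measure (Metric.sphere (0 : EuclideanSpace ℝ (Fin D)) 1) :=
  ((volume : Measure (EuclideanSpace ℝ (Fin D))).toSphere Set.univ)⁻¹ •
    (volume : Measure (EuclideanSpace ℝ (Fin D))).toSphere

/-- `μ(A) := σ_{D−1}(A ∩ S^{D−1})`, as a real number. -/
def sphMu (D : ℕ) (A : Set (EuclideanSpace ℝ (Fin D))) : ℝ :=
  (sphericalMeasure D ((↑) ⁻¹' A)).toReal


open Metric Set Pointwise
open scoped ENNReal
set_option maxHeartbeats 1000000


section Aux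

variable {E : Type*} [NormedAddCommGroup E] [InnerProductSpace ℝ E] [FiniteDimensional ℝ E]

/-- adapted orthonormal basis -/
lemma exists_adapted_onb (d m : ℕ) (V : Submodule ℝ E)
    (hV : Module.finrank ℝ V = d) (hW : Module.finrank ℝ Vᗮ = m) :
    ∃ b : OrthonormalBasis (Fin d ⊕ Fin m) ℝ E,
      (∀ i, b (Sum.inl i) ∈ V) ∧ (∀ j, b (Sum.inr j) ∈ Vᗮ) := by
  let bV := (stdOrthonormalBasis ℝ V).reindex (finCongr hV)
  let bW := (stdOrthonormalBasis ℝ Vᗮ).reindex (finCongr hW)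
  let v : Fin d ⊕ Fin m → E := Sum.elim (fun i => (bV i : E)) (fun j => (bW j : E))
  have horth : ∀ (x : V) (y : Vᗮ), ⟪(x : E), (y : E)⟫ = 0 := fun x y => y.2 x x.2
  have hon : Orthonormal ℝ v := by
    constructor
    · rintro (i | j)
      · simp only [v, Sum.elim_inl]; exact bV.orthonormal.1 i
      · simp only [v, Sum.elim_inr]; exact bW.orthonormal.1 j
    · rintro (i | j) (i' | j') hne
      · have := bV.orthonormal.2 (i := i) (j := i') (by simpa using hne)
        simpa [v, Submodule.coe_inner] using this
      · exact horth _ _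
      · rw [real_inner_comm]; exact horth _ _
      · have := bW.orthonormal.2 (i := j) (j := j') (by simpa using hne)
        simpa [v, Submodule.coe_inner] using this
  have hspan : ⊤ ≤ Submodule.span ℝ (Set.range v) := by
    rw [← Submodule.sup_orthogonal_of_hasOrthogonalProjection (K := V)]
    apply sup_le
    · intro x hx
      have : x ∈ Submodule.map V.subtype ⊤ := ⟨⟨x, hx⟩, trivial, rfl⟩
      rw [← bV.toBasis.span_eq, Submodule.map_span] at this
      refine Submodule.span_mono ?_ this
      rintro y ⟨z, ⟨i, rfl⟩, rfl⟩
      exact ⟨Sum.inl i, by simp [v]⟩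
    · intro x hx
      have : x ∈ Submodule.map Vᗮ.subtype ⊤ := ⟨⟨x, hx⟩, trivial, rfl⟩
      rw [← bW.toBasis.span_eq, Submodule.map_span] at this
      refine Submodule.span_mono ?_ this
      rintro y ⟨z, ⟨i, rfl⟩, rfl⟩
      exact ⟨Sum.inr i, by simp [v]⟩
  refine ⟨OrthonormalBasis.mk hon hspan, fun i => ?_, fun j => ?_⟩
  · rw [OrthonormalBasis.coe_mk]; exact (bV i).2
  · rw [OrthonormalBasis.coe_mk]; exact (bW j).2

end Aux

variable {n m : ℕ}

def projL (y : EuclideanSpace ℝ (Fin n ⊕ Fin m)) : EuclideanSpace ℝ (Fin n) :=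
  WithLp.toLp 2 (fun i => y (Sum.inl i))

def projR (y : EuclideanSpace ℝ (Fin n ⊕ Fin m)) : EuclideanSpace ℝ (Fin m) :=
  WithLp.toLp 2 (fun j => y (Sum.inr j))

lemma norm_sq_split (y : EuclideanSpace ℝ (Fin n ⊕ Fin m)) :
    ‖y‖ ^ 2 = ‖projL y‖ ^ 2 + ‖projR y‖ ^ 2 := by
  have h1 : ‖y‖ ^ 2 = ∑ i, ‖y i‖ ^ 2 := by
    rw [EuclideanSpace.norm_eq, Real.sq_sqrt (by positivity)]
  have h2 : ‖projL y‖ ^ 2 = ∑ i, ‖projL y i‖ ^ 2 := by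
    rw [EuclideanSpace.norm_eq, Real.sq_sqrt (by positivity)]
  have h3 : ‖projR y‖ ^ 2 = ∑ i, ‖projR y i‖ ^ 2 := by
    rw [EuclideanSpace.norm_eq, Real.sq_sqrt (by positivity)]
  rw [h1, h2, h3, Fintype.sum_sum_type]
  rfl

lemma norm_projL_le (y : EuclideanSpace ℝ (Fin n ⊕ Fin m)) : ‖projL y‖ ≤ ‖y‖ := by
  have := norm_sq_split y
  nlinarith [norm_nonneg (projL y), norm_nonneg (projR y), norm_nonneg y, sq_nonneg (‖projR y‖)]

lemma norm_projR_le (y : EuclideanSpace ℝ (Fin n ⊕ Fin m)) : ‖projR y‖ ≤ ‖y‖ := by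
  have := norm_sq_split y
  nlinarith [norm_nonneg (projL y), norm_nonneg (projR y), norm_nonneg y]

lemma projProd_eq (A : Set (EuclideanSpace ℝ (Fin n))) (B : Set (EuclideanSpace ℝ (Fin m))) :
    {y : EuclideanSpace ℝ (Fin n ⊕ Fin m) | projL y ∈ A ∧ projR y ∈ B}
      = (⇑((MeasurableEquiv.toLp 2 (Fin n → ℝ)).prodCongr
            (MeasurableEquiv.toLp 2 (Fin m → ℝ)))
          ∘ ⇑(MeasurableEquiv.sumPiEquivProdPi (fun _ : Fin n ⊕ Fin m => ℝ))
          ∘ ⇑(MeasurableEquiv.toLp 2 (Fin n ⊕ Fin m → ℝ)).symm) ⁻¹' (A ×ˢ B) := by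
  ext y
  simp only [Set.mem_setOf_eq, Set.mem_preimage, Function.comp_apply, Set.mem_prod]
  rfl

lemma measurableSet_projProd {A : Set (EuclideanSpace ℝ (Fin n))}
    {B : Set (EuclideanSpace ℝ (Fin m))} (hA : MeasurableSet A) (hB : MeasurableSet B) :
    MeasurableSet {y : EuclideanSpace ℝ (Fin n ⊕ Fin m) | projL y ∈ A ∧ projR y ∈ B} := by
  rw [projProd_eq]
  exact (hA.prod hB).preimage
    ((((MeasurableEquiv.toLp 2 (Fin n → ℝ)).prodCongr
        (MeasurableEquiv.toLp 2 (Fin m → ℝ))).measurable.comp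
      (MeasurableEquiv.sumPiEquivProdPi (fun _ : Fin n ⊕ Fin m => ℝ)).measurable).comp
      (MeasurableEquiv.toLp 2 (Fin n ⊕ Fin m → ℝ)).symm.measurable)

lemma volume_proj_prod (A : Set (EuclideanSpace ℝ (Fin n))) (B : Set (EuclideanSpace ℝ (Fin m)))
    (hA : MeasurableSet A) (hB : MeasurableSet B) :
    volume {y : EuclideanSpace ℝ (Fin n ⊕ Fin m) | projL y ∈ A ∧ projR y ∈ B}
      = volume A * volume B := by
  have hmp : MeasurePreserving
      (⇑((MeasurableEquiv.toLp 2 (Fin n → ℝ)).prodCongr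
            (MeasurableEquiv.toLp 2 (Fin m → ℝ)))
        ∘ ⇑(MeasurableEquiv.sumPiEquivProdPi (fun _ : Fin n ⊕ Fin m => ℝ))
        ∘ ⇑(MeasurableEquiv.toLp 2 (Fin n ⊕ Fin m → ℝ)).symm) volume volume :=
    (((EuclideanSpace.volume_preserving_symm_measurableEquiv_toLp (Fin n)).symm).prod
      ((EuclideanSpace.volume_preserving_symm_measurableEquiv_toLp (Fin m)).symm)).comp
      ((volume_measurePreserving_sumPiEquivProdPi (fun _ : Fin n ⊕ Fin m => ℝ)).comp
        (EuclideanSpace.volume_preserving_symm_measurableEquiv_toLp (Fin n ⊕ Fin m)))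
  rw [projProd_eq, hmp.measure_preimage (hA.prod hB).nullMeasurableSet, Measure.volume_eq_prod,
    Measure.prod_prod]

section SmulInv

variable {E : Type*} [NormedAddCommGroup E] [InnerProductSpace ℝ E]

lemma Ioo_smul_preimage (S : Set E) (hS : ∀ t : ℝ, 0 < t → ∀ x ∈ S, t • x ∈ S) :
    Set.Ioo (0:ℝ) 1 • ((((↑) : sphere (0:E) 1 → E)) '' (((↑) : sphere (0:E) 1 → E) ⁻¹' S))
      = S ∩ (ball (0:E) 1 \ {0}) := by
  ext x
  constructor
  · rintro ⟨t, ht, y, ⟨w, hw, rfl⟩, rfl⟩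
    have hw1 : ‖(w : E)‖ = 1 := by simpa using w.2
    refine ⟨hS t ht.1 _ hw, ?_, ?_⟩
    · simp [norm_smul, hw1, abs_of_pos ht.1, ht.2]
    · simp only [Set.mem_singleton_iff]
      intro h
      have : ‖t • (w : E)‖ = t := by simp [norm_smul, hw1, abs_of_pos ht.1]
      rw [h, norm_zero] at this
      exact ht.1.ne this
  · rintro ⟨hxS, hx1, hx0⟩
    simp only [Set.mem_singleton_iff] at hx0
    have hn : 0 < ‖x‖ := norm_pos_iff.2 hx0
    have hn1 : ‖x‖ < 1 := by simpa using hx1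
    refine ⟨‖x‖, ⟨hn, hn1⟩, ‖x‖⁻¹ • x, ⟨⟨‖x‖⁻¹ • x, ?_⟩, ?_⟩, ?_⟩
    · simp [norm_smul, abs_of_pos (inv_pos.2 hn), inv_mul_cancel₀ hn.ne']
    · exact ⟨hS _ (inv_pos.2 hn) _ hxS, rfl⟩
    · simp [smul_smul, mul_inv_cancel₀ hn.ne']

/-- spherical cone geometry: points near `(5/8) • c` are in the cone and in a norm window -/
lemma mem_cone_of_close {ψ : ℝ} (hψ : ψ ∈ Set.Ioo 0 (Real.pi / 2)) {c : E} (hc : ‖c‖ = 1)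
    {U : Submodule ℝ E} (hcU : c ∈ U) {u : E} (hu : u ∈ U)
    (h : ‖u - (5/8 : ℝ) • c‖ < min (1/16) ((5/16) * (1 - Real.cos ψ))) :
    (u ∈ U ∧ ‖u‖ * Real.cos ψ ≤ ⟪c, u⟫) ∧ 1/2 ≤ ‖u‖ ∧ ‖u‖ ≤ 3/4 := by
  have hpi : ψ ≤ Real.pi := le_trans hψ.2.le (by linarith [Real.pi_pos])
  have hcos1 : Real.cos ψ < 1 := by
    have := Real.cos_lt_cos_of_nonneg_of_le_pi le_rfl hpi hψ.1
    simpa using this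
  have hcospos : 0 < Real.cos ψ :=
    Real.cos_pos_of_mem_Ioo ⟨by linarith [Real.pi_pos, hψ.1], hψ.2⟩
  have h1 : ‖u - (5/8 : ℝ) • c‖ < 1/16 := lt_of_lt_of_le h (min_le_left _ _)
  have h2 : ‖u - (5/8 : ℝ) • c‖ < (5/16) * (1 - Real.cos ψ) :=
    lt_of_lt_of_le h (min_le_right _ _)
  have hd0 : 0 ≤ ‖u - (5/8 : ℝ) • c‖ := norm_nonneg _
  have hnc : ‖(5/8 : ℝ) • c‖ = 5/8 := by
    rw [norm_smul, hc]; norm_num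
  have hub : ‖u‖ ≤ 3/4 := by
    have h' : ‖u - (5/8:ℝ)•c + (5/8:ℝ)•c‖ ≤ ‖u - (5/8:ℝ)•c‖ + ‖(5/8:ℝ)•c‖ := norm_add_le _ _
    rw [sub_add_cancel, hnc] at h'
    linarith
  have hlb : 1/2 ≤ ‖u‖ := by
    have habs : |‖u‖ - ‖(5/8:ℝ) • c‖| ≤ ‖u - (5/8:ℝ) • c‖ := abs_norm_sub_norm_le _ _
    rw [hnc] at habs
    have := (abs_le.1 habs).1
    linarith
  have hsplit : ⟪c, u - (5/8:ℝ) • c⟫ = ⟪c, u⟫ - 5/8 := by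
    rw [inner_sub_right, real_inner_smul_right, real_inner_self_eq_norm_mul_norm, hc]
    norm_num
  have hcs : |⟪c, u - (5/8:ℝ) • c⟫| ≤ ‖u - (5/8:ℝ) • c‖ := by
    have := abs_real_inner_le_norm c (u - (5/8:ℝ) • c)
    rwa [hc, one_mul] at this
  have hinner : 5/8 - ‖u - (5/8:ℝ) • c‖ ≤ ⟪c, u⟫ := by
    have := (abs_le.1 hcs).1
    rw [hsplit] at this; linarith
  have hub2 : ‖u‖ ≤ 5/8 + ‖u - (5/8:ℝ)•c‖ := by
    have habs : |‖u‖ - ‖(5/8:ℝ) • c‖| ≤ ‖u - (5/8:ℝ) • c‖ := abs_norm_sub_norm_le _ _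
    rw [hnc] at habs
    have := (abs_le.1 habs).2
    linarith
  refine ⟨⟨hu, ?_⟩, hlb, hub⟩
  have hmul : ‖u‖ * Real.cos ψ ≤ (5/8 + ‖u - (5/8:ℝ)•c‖) * Real.cos ψ :=
    mul_le_mul_of_nonneg_right hub2 hcospos.le
  nlinarith [hmul, hinner, hcospos, hcos1, h2, hd0]

end SmulInv

section Coord

variable {E : Type*} [NormedAddCommGroup E] [InnerProductSpace ℝ E] [FiniteDimensional ℝ E]
  {d m : ℕ} {V : Submodule ℝ E} {b : OrthonormalBasis (Fin d ⊕ Fin m) ℝ E}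

lemma repr_orth (hbL : ∀ i, b (Sum.inl i) ∈ V) {y : E} (hy : y ∈ Vᗮ) :
    projL (b.repr y) = 0 ∧ ‖projR (b.repr y)‖ = ‖y‖ := by
  have hL : projL (b.repr y) = 0 := by
    ext i
    have : ⟪b (Sum.inl i), y⟫ = 0 := hy _ (hbL i)
    simpa [projL, b.repr_apply_apply] using this
  refine ⟨hL, ?_⟩
  have h1 : ‖b.repr y‖ = ‖y‖ := b.repr.norm_map y
  have h2 := norm_sq_split (b.repr y)
  rw [hL, norm_zero, h1] at h2
  nlinarith [norm_nonneg (projR (b.repr y)), norm_nonneg y]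

lemma repr_mem (hbR : ∀ j, b (Sum.inr j) ∈ Vᗮ) {y : E} (hy : y ∈ V) :
    projR (b.repr y) = 0 ∧ ‖projL (b.repr y)‖ = ‖y‖ := by
  have hR : projR (b.repr y) = 0 := by
    ext j
    have : ⟪y, b (Sum.inr j)⟫ = 0 := (hbR j) y hy
    rw [real_inner_comm] at this
    simpa [projR, b.repr_apply_apply] using this
  refine ⟨hR, ?_⟩
  have h1 : ‖b.repr y‖ = ‖y‖ := b.repr.norm_map y
  have h2 := norm_sq_split (b.repr y)
  rw [hR, norm_zero, h1] at h2
  nlinarith [norm_nonneg (projL (b.repr y)), norm_nonneg y]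

lemma normR_eq (hbL : ∀ i, b (Sum.inl i) ∈ V) (hbR : ∀ j, b (Sum.inr j) ∈ Vᗮ) (x : E) :
    ‖x - (Submodule.orthogonalProjection V x : E)‖ = ‖projR (b.repr x)‖ := by
  have hy : x - (Submodule.orthogonalProjection V x : E) ∈ Vᗮ :=
    Submodule.sub_starProjection_mem_orthogonal (K := V) x
  have h1 := (repr_orth hbL hy).2
  have h2 := (repr_mem hbR (Submodule.orthogonalProjection V x).2).1
  have h3 : projR (b.repr (x - (Submodule.orthogonalProjection V x : E))) = projR (b.repr x) := by
    rw [map_sub]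
    ext j
    have : projR (b.repr x - b.repr ((Submodule.orthogonalProjection V x : E))) j
        = projR (b.repr x) j - projR (b.repr ((Submodule.orthogonalProjection V x : E))) j := rfl
    rw [this, h2]
    simp
  rw [← h1, h3]

lemma normL_eq (hbL : ∀ i, b (Sum.inl i) ∈ V) (hbR : ∀ j, b (Sum.inr j) ∈ Vᗮ) (x : E) :
    ‖(Submodule.orthogonalProjection V x : E)‖ = ‖projL (b.repr x)‖ := by
  have h1 := (repr_mem hbR (Submodule.orthogonalProjection V x).2).2
  have h2 : projL (b.repr (x - (Submodule.orthogonalProjection V x : E))) = 0 :=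
    (repr_orth hbL (Submodule.sub_starProjection_mem_orthogonal (K := V) x)).1
  have h3 : projL (b.repr ((Submodule.orthogonalProjection V x : E))) = projL (b.repr x) := by
    have hx : (Submodule.orthogonalProjection V x : E) = x - (x - (Submodule.orthogonalProjection V x : E)) := by
      abel
    rw [hx, map_sub]
    ext i
    have : projL (b.repr x - b.repr (x - (Submodule.orthogonalProjection V x : E))) i
        = projL (b.repr x) i - projL (b.repr (x - (Submodule.orthogonalProjection V x : E))) i := rfl
    rw [this, h2]
    simp
  rw [← h1, h3]

end Coord

section Span

variable {E : Type*} [NormedAddCommGroup E] [InnerProductSpace ℝ E] [FiniteDimensional ℝ E]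

lemma le_span_sphericalCone {U : Submodule ℝ E} {c : E} (hc : ‖c‖ = 1) (hcU : c ∈ U)
    {ψ : ℝ} (hψ : ψ ∈ Set.Ioo 0 (Real.pi / 2)) :
    U ≤ Submodule.span ℝ (sphericalCone U c ψ) := by
  have hpi : ψ ≤ Real.pi := le_trans hψ.2.le (by linarith [Real.pi_pos])
  have hcos1 : Real.cos ψ < 1 := by
    have := Real.cos_lt_cos_of_nonneg_of_le_pi le_rfl hpi hψ.1
    simpa using this
  have hcos1' : Real.cos ψ ≤ 1 := hcos1.le
  have hccone : c ∈ sphericalCone U c ψ := by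
    refine ⟨hcU, ?_⟩
    rw [hc, one_mul, real_inner_self_eq_norm_mul_norm, hc]
    linarith
  intro x hx
  set δ' : ℝ := (1 - Real.cos ψ) / 2 with hδ'
  have hδ'pos : 0 < δ' := by rw [hδ']; linarith
  set s : ℝ := δ' / (‖x‖ + 1) with hs
  have hxnorm : (0:ℝ) < ‖x‖ + 1 := by positivity
  have hspos : 0 < s := by positivity
  have hsx : s * ‖x‖ ≤ δ' := by
    rw [hs, div_mul_eq_mul_div, div_le_iff₀ hxnorm]
    nlinarith [norm_nonneg x]
  have hycone : c + s • x ∈ sphericalCone U c ψ := by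
    refine ⟨U.add_mem hcU (U.smul_mem s hx), ?_⟩
    have hinner : ⟪c, c + s • x⟫ = 1 + s * ⟪c, x⟫ := by
      rw [inner_add_right, real_inner_smul_right, real_inner_self_eq_norm_mul_norm, hc]
      ring
    have hcs : |⟪c, x⟫| ≤ ‖x‖ := by
      have := abs_real_inner_le_norm c x
      rwa [hc, one_mul] at this
    have hnorm : ‖c + s • x‖ ≤ 1 + s * ‖x‖ := by
      have := norm_add_le c (s • x)
      rwa [hc, norm_smul, Real.norm_eq_abs, abs_of_pos hspos] at this
    have h1 : ‖c + s • x‖ * Real.cos ψ ≤ (1 + s * ‖x‖) * Real.cos ψ := by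
      apply mul_le_mul_of_nonneg_right hnorm
      exact (Real.cos_pos_of_mem_Ioo ⟨by linarith [Real.pi_pos, hψ.1], hψ.2⟩).le
    have h2 : 1 - s * ‖x‖ ≤ ⟪c, c + s • x⟫ := by
      rw [hinner]
      nlinarith [(abs_le.1 hcs).1, hspos]
    have hcosnn : 0 ≤ Real.cos ψ :=
      (Real.cos_pos_of_mem_Ioo ⟨by linarith [Real.pi_pos, hψ.1], hψ.2⟩).le
    nlinarith [hsx, hδ'pos]
  have hymem : c + s • x ∈ Submodule.span ℝ (sphericalCone U c ψ) :=
    Submodule.subset_span hycone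
  have hcmem : c ∈ Submodule.span ℝ (sphericalCone U c ψ) :=
    Submodule.subset_span hccone
  have : s • x ∈ Submodule.span ℝ (sphericalCone U c ψ) := by
    have := Submodule.sub_mem _ hymem hcmem
    simpa using this
  have := Submodule.smul_mem _ s⁻¹ this
  rwa [smul_smul, inv_mul_cancel₀ hspos.ne', one_smul] at this

end Span

/-- **Proposition 2 (attention decay as intrinsic dimension grows).** Let `1 ≤ d₁ < d₂ ≤ D`,
`ψ₁, ψ₂ ∈ (0,π/2)`, and let `c₁, c₂` be unit vectors in `ℝ^D`. Suppose `C₀` is a convex cone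
of dimension `d₁` contained in a `d₁`-dimensional spherical cone `P^{d₁}[c₁,ψ₁]`, and `Cₙ` is
a convex cone of dimension `d₂` containing a `d₂`-dimensional spherical cone `P^{d₂}[c₂,ψ₂]`.
Then there is a constant `K` (independent of `ε`) such that for all `ε ∈ (0,1)`,
`μ(C₀^ε) ≤ K · ε^{d₂−d₁} · μ(Cₙ^ε)`. -/
theorem stmt_8 (D d₁ d₂ : ℕ) (hd₁ : 1 ≤ d₁) (hd₁₂ : d₁ < d₂) (hd₂D : d₂ ≤ D)
    (ψ₁ ψ₂ : ℝ) (hψ₁ : ψ₁ ∈ Set.Ioo 0 (Real.pi / 2)) (hψ₂ : ψ₂ ∈ Set.Ioo 0 (Real.pi / 2))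
    (c₁ c₂ : EuclideanSpace ℝ (Fin D)) (hc₁ : ‖c₁‖ = 1) (hc₂ : ‖c₂‖ = 1)
    (C₀ Cn : ConvexCone ℝ (EuclideanSpace ℝ (Fin D)))
    (hC₀dim : Module.finrank ℝ
      (Submodule.span ℝ (C₀ : Set (EuclideanSpace ℝ (Fin D)))) = d₁)
    (hCndim : Module.finrank ℝ
      (Submodule.span ℝ (Cn : Set (EuclideanSpace ℝ (Fin D)))) = d₂)
    (U₁ U₂ : Submodule ℝ (EuclideanSpace ℝ (Fin D)))
    (hU₁dim : Module.finrank ℝ U₁ = d₁) (hU₂dim : Module.finrank ℝ U₂ = d₂)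
    (hc₁U : c₁ ∈ U₁) (hc₂U : c₂ ∈ U₂)
    (hsub : (C₀ : Set (EuclideanSpace ℝ (Fin D))) ⊆ sphericalCone U₁ c₁ ψ₁)
    (hsup : sphericalCone U₂ c₂ ψ₂ ⊆ (Cn : Set (EuclideanSpace ℝ (Fin D)))) :
    ∃ K : ℝ, ∀ ε ∈ Set.Ioo (0 : ℝ) 1,
      sphMu D (approxCone C₀ ε) ≤ K * ε ^ (d₂ - d₁) * sphMu D (approxCone Cn ε) := by
  classical
  have hDpos : 0 < D := by omega
  have hfinE : Module.finrank ℝ (EuclideanSpace ℝ (Fin D)) = D := finrank_euclideanSpace_fin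
  set V₁ := Submodule.span ℝ (C₀ : Set (EuclideanSpace ℝ (Fin D))) with hV₁def
  set m₁ := D - d₁ with hm₁def
  set m₂ := D - d₂ with hm₂def
  have hV₁orth : Module.finrank ℝ V₁ᗮ = m₁ := by
    have h := Submodule.finrank_add_finrank_orthogonal (K := V₁)
    rw [hfinE, hC₀dim] at h
    omega
  obtain ⟨b₁, hb₁L, hb₁R⟩ := exists_adapted_onb d₁ m₁ V₁ hC₀dim hV₁orth
  have hU₂orth : Module.finrank ℝ U₂ᗮ = m₂ := by
    have h := Submodule.finrank_add_finrank_orthogonal (K := U₂)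
    rw [hfinE, hU₂dim] at h
    omega
  obtain ⟨b₂, hb₂L, hb₂R⟩ := exists_adapted_onb d₂ m₂ U₂ hU₂dim hU₂orth
  have hspanCn : Submodule.span ℝ (Cn : Set (EuclideanSpace ℝ (Fin D))) = U₂ :=
    (Submodule.eq_of_le_of_finrank_le
      ((le_span_sphericalCone hc₂ hc₂U hψ₂).trans (Submodule.span_mono hsup))
      (le_of_eq (hCndim.trans hU₂dim.symm))).symm
  -- the sphere measure
  set ν := (volume : Measure (EuclideanSpace ℝ (Fin D))).toSphere with hν
  set κ := ν Set.univ with hκdef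
  have hκ : κ = (D : ℝ≥0∞) * volume (ball (0:(EuclideanSpace ℝ (Fin D))) 1) := by
    rw [hκdef, hν, Measure.toSphere_apply_univ, hfinE]
  have hκ0 : κ ≠ 0 := by
    rw [hκ]
    exact mul_ne_zero (by exact_mod_cast hDpos.ne') (measure_ball_pos _ _ one_pos).ne'
  have hκtop : κ ≠ ⊤ :=
    hκ ▸ ENNReal.mul_ne_top (ENNReal.natCast_ne_top D) measure_ball_lt_top.ne
  have hsphEq : ∀ s : Set (sphere (0:(EuclideanSpace ℝ (Fin D))) 1), sphericalMeasure D s = κ⁻¹ * ν s := by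
    intro s
    rw [sphericalMeasure, Measure.smul_apply, smul_eq_mul]
  -- constants
  set δ := min (1/16 : ℝ) ((5/16) * (1 - Real.cos ψ₂)) with hδdef
  have hcos1 : Real.cos ψ₂ < 1 := by
    have hpi : ψ₂ ≤ Real.pi := le_trans hψ₂.2.le (by linarith [Real.pi_pos])
    have := Real.cos_lt_cos_of_nonneg_of_le_pi le_rfl hpi hψ₂.1
    simpa using this
  have hδpos : 0 < δ := lt_min (by norm_num) (by nlinarith)
  set B1 : ℝ≥0∞ := volume (ball (0 : EuclideanSpace ℝ (Fin d₁)) 1) with hB1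
  set B2 : ℝ≥0∞ := volume (ball (0 : EuclideanSpace ℝ (Fin m₁)) 1) with hB2
  set B3 : ℝ≥0∞ := volume (ball (0 : EuclideanSpace ℝ (Fin d₂)) 1) with hB3
  set B4 : ℝ≥0∞ := volume (ball (0 : EuclideanSpace ℝ (Fin m₂)) 1) with hB4
  set Cup : ℝ≥0∞ := (D : ℝ≥0∞) * (B1 * B2) with hCup
  set Clo : ℝ≥0∞ := (D : ℝ≥0∞) * ((ENNReal.ofReal (δ ^ d₂) * B3) * B4) with hClo
  have hCuptop : Cup ≠ ⊤ :=
    ENNReal.mul_ne_top (ENNReal.natCast_ne_top D)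
      (ENNReal.mul_ne_top measure_ball_lt_top.ne measure_ball_lt_top.ne)
  have hClotop : Clo ≠ ⊤ :=
    ENNReal.mul_ne_top (ENNReal.natCast_ne_top D)
      (ENNReal.mul_ne_top (ENNReal.mul_ne_top ENNReal.ofReal_ne_top measure_ball_lt_top.ne)
        measure_ball_lt_top.ne)
  have hClo0 : Clo ≠ 0 := by
    refine mul_ne_zero (by exact_mod_cast hDpos.ne') (mul_ne_zero (mul_ne_zero ?_ ?_) ?_)
    · exact (ENNReal.ofReal_pos.2 (pow_pos hδpos d₂)).ne'
    · exact (measure_ball_pos _ _ one_pos).ne'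
    · exact (measure_ball_pos _ _ one_pos).ne'
  set P : ℝ := (κ⁻¹ * Cup).toReal with hP
  set Q : ℝ := (κ⁻¹ * Clo).toReal with hQ
  have hP0 : 0 ≤ P := ENNReal.toReal_nonneg
  have hQpos : 0 < Q := by
    rw [hQ]
    refine ENNReal.toReal_pos (mul_ne_zero (ENNReal.inv_ne_zero.2 hκtop) hClo0) ?_
    exact ENNReal.mul_ne_top (ENNReal.inv_ne_top.2 hκ0) hClotop
  refine ⟨P * 4 ^ m₂ / Q, ?_⟩
  rintro ε ⟨hε0, hε1⟩
  -- UPPER BOUND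
  have hupper : sphMu D (approxCone C₀ ε) ≤ ε ^ m₁ * P := by
    set S1 : Set (EuclideanSpace ℝ (Fin D)) := {x | ‖x - (Submodule.orthogonalProjection V₁ x : (EuclideanSpace ℝ (Fin D)))‖ ≤ ε * ‖x‖} with hS1
    have hcontP : Continuous fun x : (EuclideanSpace ℝ (Fin D)) => x - (Submodule.orthogonalProjection V₁ x : (EuclideanSpace ℝ (Fin D))) :=
      continuous_id.sub (V₁.subtypeL.comp (Submodule.orthogonalProjection V₁)).continuous
    have hS1closed : IsClosed S1 :=
      isClosed_le hcontP.norm (continuous_const.mul continuous_norm)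
    have hS1inv : ∀ t : ℝ, 0 < t → ∀ x ∈ S1, t • x ∈ S1 := by
      intro t ht x hx
      have h1 : t • x - (Submodule.orthogonalProjection V₁ (t • x) : (EuclideanSpace ℝ (Fin D)))
          = t • (x - (Submodule.orthogonalProjection V₁ x : (EuclideanSpace ℝ (Fin D)))) := by
        rw [_root_.map_smul, Submodule.coe_smul, smul_sub]
      simp only [S1, Set.mem_setOf_eq] at hx ⊢
      rw [h1, norm_smul, norm_smul, Real.norm_eq_abs, abs_of_pos ht]
      calc t * ‖x - (Submodule.orthogonalProjection V₁ x : (EuclideanSpace ℝ (Fin D)))‖ ≤ t * (ε * ‖x‖) :=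
            mul_le_mul_of_nonneg_left hx ht.le
      _ = ε * (t * ‖x‖) := by ring
    have hsub1 : (((↑) : sphere (0:(EuclideanSpace ℝ (Fin D))) 1 → (EuclideanSpace ℝ (Fin D))) ⁻¹' approxCone C₀ ε)
        ⊆ ((↑) ⁻¹' S1) := by
      rintro w ⟨u, hu, v, hv, hsum, hvn⟩
      have huV : u ∈ V₁ := Submodule.subset_span hu
      have hPw : (Submodule.orthogonalProjection V₁ (w : (EuclideanSpace ℝ (Fin D))) : (EuclideanSpace ℝ (Fin D))) = u :=
        Submodule.eq_starProjection_of_mem_orthogonal' huV hv hsum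
      have : (w : (EuclideanSpace ℝ (Fin D))) - (Submodule.orthogonalProjection V₁ (w : (EuclideanSpace ℝ (Fin D))) : (EuclideanSpace ℝ (Fin D))) = v := by
        rw [hPw, hsum]; abel
      simp only [Set.mem_preimage, S1, Set.mem_setOf_eq, this]
      exact hvn
    have hmeas1 : MeasurableSet (((↑) : sphere (0:(EuclideanSpace ℝ (Fin D))) 1 → (EuclideanSpace ℝ (Fin D))) ⁻¹' S1) :=
      (hS1closed.preimage continuous_subtype_val).measurableSet
    have hchain : ν (((↑) : sphere (0:(EuclideanSpace ℝ (Fin D))) 1 → (EuclideanSpace ℝ (Fin D))) ⁻¹' approxCone C₀ ε)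
        ≤ ENNReal.ofReal (ε ^ m₁) * Cup := by
      calc ν (((↑) : sphere (0:(EuclideanSpace ℝ (Fin D))) 1 → (EuclideanSpace ℝ (Fin D))) ⁻¹' approxCone C₀ ε)
          ≤ ν (((↑) : sphere (0:(EuclideanSpace ℝ (Fin D))) 1 → (EuclideanSpace ℝ (Fin D))) ⁻¹' S1) := measure_mono hsub1
      _ = (D : ℝ≥0∞) * volume (S1 ∩ (ball (0:(EuclideanSpace ℝ (Fin D))) 1 \ {0})) := by
          rw [hν, Measure.toSphere_apply' _ hmeas1, hfinE, Ioo_smul_preimage S1 hS1inv]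
      _ ≤ (D : ℝ≥0∞) * volume (⇑b₁.repr ⁻¹'
            {y | projL y ∈ ball (0 : EuclideanSpace ℝ (Fin d₁)) 1
              ∧ projR y ∈ closedBall (0 : EuclideanSpace ℝ (Fin m₁)) ε}) := by
          gcongr
          rintro x ⟨hxS, hxb, -⟩
          have hxn : ‖x‖ < 1 := mem_ball_zero_iff.1 hxb
          constructor
          · rw [Set.mem_setOf_eq] at hxS
            refine mem_ball_zero_iff.2 (lt_of_le_of_lt ?_ hxn)
            calc ‖projL (b₁.repr x)‖ ≤ ‖b₁.repr x‖ := norm_projL_le _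
            _ = ‖x‖ := b₁.repr.norm_map x
          · refine mem_closedBall_zero_iff.2 ?_
            rw [← normR_eq hb₁L hb₁R x]
            refine le_trans hxS ?_
            nlinarith [norm_nonneg x]
      _ = (D : ℝ≥0∞) * (B1 * volume (closedBall (0 : EuclideanSpace ℝ (Fin m₁)) ε)) := by
          rw [(b₁.measurePreserving_repr).measure_preimage
            (measurableSet_projProd measurableSet_ball measurableSet_closedBall).nullMeasurableSet,
            volume_proj_prod _ _ measurableSet_ball measurableSet_closedBall]
      _ = ENNReal.ofReal (ε ^ m₁) * Cup := by
          rw [Measure.addHaar_closedBall _ _ hε0.le, finrank_euclideanSpace_fin, hCup]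
          ring
    rw [sphMu, hsphEq]
    have hfin : κ⁻¹ * (ENNReal.ofReal (ε ^ m₁) * Cup) ≠ ⊤ :=
      ENNReal.mul_ne_top (ENNReal.inv_ne_top.2 hκ0)
        (ENNReal.mul_ne_top ENNReal.ofReal_ne_top hCuptop)
    calc (κ⁻¹ * ν (((↑) : sphere (0:(EuclideanSpace ℝ (Fin D))) 1 → (EuclideanSpace ℝ (Fin D))) ⁻¹' approxCone C₀ ε)).toReal
        ≤ (κ⁻¹ * (ENNReal.ofReal (ε ^ m₁) * Cup)).toReal :=
          ENNReal.toReal_mono hfin (mul_le_mul_right hchain _)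
    _ = ε ^ m₁ * P := by
        rw [mul_left_comm, ENNReal.toReal_mul, ENNReal.toReal_ofReal (by positivity), hP]
  -- LOWER BOUND
  have hlower : (ε/4) ^ m₂ * Q ≤ sphMu D (approxCone Cn ε) := by
    set S2 : Set (EuclideanSpace ℝ (Fin D)) := {x | (Submodule.orthogonalProjection U₂ x : (EuclideanSpace ℝ (Fin D))) ∈ sphericalCone U₂ c₂ ψ₂
      ∧ ‖x - (Submodule.orthogonalProjection U₂ x : (EuclideanSpace ℝ (Fin D)))‖
          ≤ (ε/2) * ‖(Submodule.orthogonalProjection U₂ x : (EuclideanSpace ℝ (Fin D)))‖} with hS2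
    have hcontP : Continuous fun x : (EuclideanSpace ℝ (Fin D)) => (Submodule.orthogonalProjection U₂ x : (EuclideanSpace ℝ (Fin D))) :=
      (U₂.subtypeL.comp (Submodule.orthogonalProjection U₂)).continuous
    have hconeclosed : IsClosed (sphericalCone U₂ c₂ ψ₂) := by
      have h1 : IsClosed (U₂ : Set (EuclideanSpace ℝ (Fin D))) := Submodule.closed_of_finiteDimensional U₂
      have h2 : IsClosed {u : (EuclideanSpace ℝ (Fin D)) | ‖u‖ * Real.cos ψ₂ ≤ ⟪c₂, u⟫} :=
        isClosed_le (continuous_norm.mul continuous_const)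
          (Continuous.inner continuous_const continuous_id)
      exact h1.inter h2
    have hS2closed : IsClosed S2 := by
      refine IsClosed.inter (hconeclosed.preimage hcontP) ?_
      exact isClosed_le (continuous_id.sub hcontP).norm
        (continuous_const.mul hcontP.norm)
    have hS2inv : ∀ t : ℝ, 0 < t → ∀ x ∈ S2, t • x ∈ S2 := by
      intro t ht x hx
      obtain ⟨⟨hU, hin⟩, hn⟩ := hx
      have h1 : (Submodule.orthogonalProjection U₂ (t • x) : (EuclideanSpace ℝ (Fin D)))
          = t • (Submodule.orthogonalProjection U₂ x : (EuclideanSpace ℝ (Fin D))) := by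
        rw [_root_.map_smul, Submodule.coe_smul]
      refine ⟨⟨h1 ▸ U₂.smul_mem t hU, ?_⟩, ?_⟩
      · rw [h1, norm_smul, inner_smul_right, Real.norm_eq_abs, abs_of_pos ht, mul_assoc]
        exact mul_le_mul_of_nonneg_left hin ht.le
      · have h2 : t • x - (Submodule.orthogonalProjection U₂ (t • x) : (EuclideanSpace ℝ (Fin D)))
            = t • (x - (Submodule.orthogonalProjection U₂ x : (EuclideanSpace ℝ (Fin D)))) := by
          rw [h1, smul_sub]
        rw [h2, h1, norm_smul, norm_smul, Real.norm_eq_abs, abs_of_pos ht,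
          mul_left_comm]
        exact mul_le_mul_of_nonneg_left hn ht.le
    have hsub2 : (((↑) : sphere (0:(EuclideanSpace ℝ (Fin D))) 1 → (EuclideanSpace ℝ (Fin D))) ⁻¹' S2)
        ⊆ ((↑) ⁻¹' approxCone Cn ε) := by
      rintro w ⟨hcone, hn⟩
      set x : (EuclideanSpace ℝ (Fin D)) := (w : (EuclideanSpace ℝ (Fin D)))
      set u : (EuclideanSpace ℝ (Fin D)) := (Submodule.orthogonalProjection U₂ x : (EuclideanSpace ℝ (Fin D)))
      refine ⟨u, ?_, x - u, ?_, by abel, ?_⟩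
      · exact hsup hcone
      · rw [hspanCn]
        exact Submodule.sub_starProjection_mem_orthogonal (K := U₂) x
      · have hu_le : ‖u‖ ≤ ‖x‖ := by
          rw [normL_eq hb₂L hb₂R x]
          calc ‖projL (b₂.repr x)‖ ≤ ‖b₂.repr x‖ := norm_projL_le _
          _ = ‖x‖ := b₂.repr.norm_map x
        refine le_trans hn ?_
        nlinarith [norm_nonneg u, norm_nonneg x]
    have hmeas2 : MeasurableSet (((↑) : sphere (0:(EuclideanSpace ℝ (Fin D))) 1 → (EuclideanSpace ℝ (Fin D))) ⁻¹' S2) :=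
      (hS2closed.preimage continuous_subtype_val).measurableSet
    set w₀ := projL (b₂.repr ((5/8 : ℝ) • c₂)) with hw₀
    have hchain : ENNReal.ofReal ((ε/4) ^ m₂) * Clo
        ≤ ν (((↑) : sphere (0:(EuclideanSpace ℝ (Fin D))) 1 → (EuclideanSpace ℝ (Fin D))) ⁻¹' approxCone Cn ε) := by
      have hkey : ∀ x : (EuclideanSpace ℝ (Fin D)), ‖(Submodule.orthogonalProjection U₂ x : (EuclideanSpace ℝ (Fin D))) - (5/8 : ℝ) • c₂‖
          = ‖projL (b₂.repr x) - w₀‖ := by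
        intro x
        have hc' : (Submodule.orthogonalProjection U₂ ((5/8 : ℝ) • c₂) : (EuclideanSpace ℝ (Fin D))) = (5/8 : ℝ) • c₂ :=
          Submodule.starProjection_eq_self_iff.2 (U₂.smul_mem _ hc₂U)
        have h1 : (Submodule.orthogonalProjection U₂ x : (EuclideanSpace ℝ (Fin D))) - (5/8 : ℝ) • c₂
            = (Submodule.orthogonalProjection U₂ (x - (5/8 : ℝ) • c₂) : (EuclideanSpace ℝ (Fin D))) := by
          rw [map_sub]
          push_cast
          rw [hc']
        rw [h1, normL_eq hb₂L hb₂R, map_sub]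
        congr 1
      have hincl : ⇑b₂.repr ⁻¹'
            {y | projL y ∈ ball w₀ δ ∧ projR y ∈ ball (0 : EuclideanSpace ℝ (Fin m₂)) (ε/4)}
          ⊆ S2 ∩ (ball (0:(EuclideanSpace ℝ (Fin D))) 1 \ {0}) := by
        rintro x ⟨hL, hR⟩
        have hLn : ‖projL (b₂.repr x) - w₀‖ < δ := by
          rw [← dist_eq_norm]; exact hL
        have hRn : ‖projR (b₂.repr x)‖ < ε/4 := mem_ball_zero_iff.1 hR
        have hclose := mem_cone_of_close hψ₂ hc₂ hc₂U
          (Submodule.orthogonalProjection U₂ x).2 (by rw [hkey x]; exact hLn)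
        obtain ⟨hconemem, hul, huu⟩ := hclose
        have hxu : ‖x - (Submodule.orthogonalProjection U₂ x : (EuclideanSpace ℝ (Fin D)))‖ = ‖projR (b₂.repr x)‖ :=
          normR_eq hb₂L hb₂R x
        have hLeq : ‖(Submodule.orthogonalProjection U₂ x : (EuclideanSpace ℝ (Fin D)))‖ = ‖projL (b₂.repr x)‖ :=
          normL_eq hb₂L hb₂R x
        refine ⟨⟨hconemem, ?_⟩, ?_, ?_⟩
        · rw [hxu]
          nlinarith
        · have hsq := norm_sq_split (b₂.repr x)
          rw [b₂.repr.norm_map x] at hsq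
          refine mem_ball_zero_iff.2 ?_
          nlinarith [norm_nonneg x, norm_nonneg (projL (b₂.repr x)),
            norm_nonneg (projR (b₂.repr x))]
        · simp only [Set.mem_singleton_iff]
          intro h0
          rw [h0] at hLeq
          simp only [map_zero] at hLeq
          have : (Submodule.orthogonalProjection U₂ (0:(EuclideanSpace ℝ (Fin D))) : (EuclideanSpace ℝ (Fin D))) = 0 := by
            rw [map_zero]; rfl
          rw [h0] at hul
          rw [this, norm_zero] at hul
          linarith
      calc ENNReal.ofReal ((ε/4) ^ m₂) * Clo
          = (D : ℝ≥0∞) * (volume (ball w₀ δ) *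
              volume (ball (0 : EuclideanSpace ℝ (Fin m₂)) (ε/4))) := by
            rw [Measure.addHaar_ball_of_pos _ _ hδpos,
              Measure.addHaar_ball_of_pos _ _ (by linarith : (0:ℝ) < ε/4),
              finrank_euclideanSpace_fin, finrank_euclideanSpace_fin, hClo]
            ring
      _ = (D : ℝ≥0∞) * volume (⇑b₂.repr ⁻¹'
            {y | projL y ∈ ball w₀ δ ∧ projR y ∈ ball (0 : EuclideanSpace ℝ (Fin m₂)) (ε/4)}) := by
            rw [(b₂.measurePreserving_repr).measure_preimage
              (measurableSet_projProd measurableSet_ball measurableSet_ball).nullMeasurableSet,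
              volume_proj_prod _ _ measurableSet_ball measurableSet_ball]
      _ ≤ (D : ℝ≥0∞) * volume (S2 ∩ (ball (0:(EuclideanSpace ℝ (Fin D))) 1 \ {0})) := by gcongr
      _ = ν (((↑) : sphere (0:(EuclideanSpace ℝ (Fin D))) 1 → (EuclideanSpace ℝ (Fin D))) ⁻¹' S2) := by
            rw [hν, Measure.toSphere_apply' _ hmeas2, hfinE, Ioo_smul_preimage S2 hS2inv]
      _ ≤ ν (((↑) : sphere (0:(EuclideanSpace ℝ (Fin D))) 1 → (EuclideanSpace ℝ (Fin D))) ⁻¹' approxCone Cn ε) := measure_mono hsub2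
    rw [sphMu, hsphEq]
    have hfin2 : κ⁻¹ * ν (((↑) : sphere (0:(EuclideanSpace ℝ (Fin D))) 1 → (EuclideanSpace ℝ (Fin D))) ⁻¹' approxCone Cn ε) ≠ ⊤ :=
      ENNReal.mul_ne_top (ENNReal.inv_ne_top.2 hκ0) (measure_ne_top ν _)
    calc (ε/4) ^ m₂ * Q
        = (κ⁻¹ * (ENNReal.ofReal ((ε/4) ^ m₂) * Clo)).toReal := by
          rw [mul_left_comm, ENNReal.toReal_mul, ENNReal.toReal_ofReal (by positivity), hQ]
    _ ≤ (κ⁻¹ * ν (((↑) : sphere (0:(EuclideanSpace ℝ (Fin D))) 1 → (EuclideanSpace ℝ (Fin D))) ⁻¹' approxCone Cn ε)).toReal :=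
          ENNReal.toReal_mono hfin2 (mul_le_mul_right hchain _)
  -- COMBINE
  have hm : d₂ - d₁ + m₂ = m₁ := by omega
  have h4 : (4:ℝ) ^ m₂ ≠ 0 := by positivity
  calc sphMu D (approxCone C₀ ε) ≤ ε ^ m₁ * P := hupper
  _ = P * 4 ^ m₂ / Q * ε ^ (d₂ - d₁) * ((ε/4) ^ m₂ * Q) := by
      rw [div_pow, ← hm, pow_add]
      field_simp
  _ ≤ P * 4 ^ m₂ / Q * ε ^ (d₂ - d₁) * sphMu D (approxCone Cn ε) := by
      refine mul_le_mul_of_nonneg_left hlower ?_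
      have : (0:ℝ) ≤ P * 4 ^ m₂ / Q := by positivity
      positivity
end
end
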